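/- arXiv:1508.00319 — 3 statements merged into one kernel-verified Lean document; each statement's English description precedes it below -/
import Mathlib

section
/- For every integer m ≥ 5, 2^⌈m/2⌉ - ⌈m/2⌉ - 1 ≥ ⌊m/2⌋; hence, the weak modular sumset number of the cycle C_m for m ≥ 5 is ⌈m/2⌉. -/
lemma le_two_pow_sub_self_sub_one {k : ℕ} (hk : 3 ≤ k) : k ≤ 2 ^ k - k - 1 := by
  suffices h : 2 * k + 1 ≤ 2 ^ k by omega
  induction k, hk using Nat.le_induction with
  | base => norm_num
  | succ n _ ih => rw [pow_succ]; omega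

theorem stmt_13 (m : ℕ) (hm : 5 ≤ m) :
    m / 2 ≤ 2 ^ ((m + 1) / 2) - (m + 1) / 2 - 1 ∧
    max ((m + 1) / 2) (sInf {r : ℕ | 0 < r ∧ m / 2 ≤ 2 ^ r - r - 1}) = (m + 1) / 2 := by
  have hbound : m / 2 ≤ 2 ^ ((m + 1) / 2) - (m + 1) / 2 - 1 :=
    (Nat.div_le_div_right (Nat.le_succ m)).trans (le_two_pow_sub_self_sub_one (by omega))
  exact ⟨hbound, max_eq_left (Nat.sInf_le ⟨by omega, hbound⟩)⟩
end

section
/- Let G be a connected graph and suppose each vertex v is assigned a positive integer weight w(v) such that for every edge uv, w(u)·w(v) = k, where k is a fixed positive integer that is not a perfect square. Then G is bipartite. -/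
/-!
Colour each vertex `v` by whether `w v * w v < k`. Along an edge `uv` we have
`(w u * w u) * (w v * w v) = k * k`, so the two squares cannot both lie below `k`, nor both
above it; and neither equals `k`, since `k` is not a square. Hence adjacent vertices get
different colours.
-/

namespace Nat

theorem not_mul_self_lt_and_mul_self_lt_of_mul_eq {a b k : ℕ} (h : a * b = k) :
    ¬ (a * a < k ∧ b * b < k) := by
  rintro ⟨ha, hb⟩
  have hlt := Nat.mul_lt_mul'' ha hb
  rw [mul_mul_mul_comm, h] at hlt
  exact lt_irrefl _ hlt

theorem not_lt_mul_self_and_lt_mul_self_of_mul_eq {a b k : ℕ} (h : a * b = k) :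
    ¬ (k < a * a ∧ k < b * b) := by
  rintro ⟨ha, hb⟩
  have hlt := Nat.mul_lt_mul'' ha hb
  rw [mul_mul_mul_comm, h] at hlt
  exact lt_irrefl _ hlt

theorem mul_self_lt_iff_not_mul_self_lt_of_mul_eq {a b k : ℕ} (h : a * b = k)
    (hsq : ¬ ∃ t : ℕ, t * t = k) : a * a < k ↔ ¬ b * b < k := by
  have hne : ∀ t, t * t ≠ k := fun t ht => hsq ⟨t, ht⟩
  refine ⟨fun ha hb => not_mul_self_lt_and_mul_self_lt_of_mul_eq h ⟨ha, hb⟩, fun hb => ?_⟩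
  have hb' : k < b * b := lt_of_le_of_ne (not_lt.mp hb) (hne b).symm
  have ha : a * a ≤ k := not_lt.mp fun ha => not_lt_mul_self_and_lt_mul_self_of_mul_eq h ⟨ha, hb'⟩
  exact lt_of_le_of_ne ha (hne a)

end Nat

theorem stmt_17_general {V : Type*} (G : SimpleGraph V)
    (k : ℕ) (hsq : ¬ ∃ t : ℕ, t * t = k)
    (w : V → ℕ)
    (hprod : ∀ u v, G.Adj u v → w u * w v = k) :
    G.Colorable 2 := by
  let c : G.Coloring Bool := SimpleGraph.Coloring.mk (fun v => decide (w v * w v < k))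
    fun {u v} huv => by
      simp only [Ne, decide_eq_decide,
        Nat.mul_self_lt_iff_not_mul_self_lt_of_mul_eq (hprod u v huv) hsq]
      exact not_iff_self
  exact c.colorable

theorem stmt_17 {V : Type*} (G : SimpleGraph V) (hconn : G.Connected)
    (k : ℕ) (hk : 0 < k) (hsq : ¬ ∃ t : ℕ, t * t = k)
    (w : V → ℕ) (hw : ∀ v, 0 < w v)
    (hprod : ∀ u v, G.Adj u v → w u * w v = k) :
    G.Colorable 2 :=
  stmt_17_general G k hsq w hprod
end

section
/- Suppose f assigns non-empty subsets of ZMod n to the vertices of a graph G such that for every edge uv, either f(u) or f(v) is a singleton, and for every edge uv the sumset f(u) + f(v) equals all of ZMod n. Then every non-singleton-labeled vertex has set-label of cardinality n (i.e., equal to ZMod n), and the singleton-labeled neighbors of a common vertex must have distinct labels if f is injective; in particular, if G is connected then G is a star graph. -/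
/-!
Translating a set by a group element preserves its size, so `{a} + B = ZMod n` forces
`B = ZMod n`. Hence on every edge the non-singleton endpoint, or either endpoint if both are
singletons, carries the full label `ZMod n`. A connected graph with an edge has no isolated
vertex, so each vertex with a non-singleton label gets the full label from its edges; and since
the labeling is injective, at most one vertex carries the full label, and every edge meets it.
-/

open Pointwise Finset

namespace Finset

variable {α : Type*} [DecidableEq α] [Fintype α]

theorem eq_univ_of_card_eq_one_of_add_eq_univ [AddGroup α] {A B : Finset α}
    (hA : #A = 1) (h : A + B = univ) : B = univ := by
  obtain ⟨a, rfl⟩ := card_eq_one.mp hA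
  rw [singleton_add] at h
  exact vadd_finset_eq_univ.mp h

theorem eq_univ_of_add_eq_univ_of_card_eq_one [AddCommGroup α] {A B : Finset α}
    (hB : #B = 1) (h : A + B = univ) : A = univ :=
  eq_univ_of_card_eq_one_of_add_eq_univ hB (add_comm A B ▸ h)

end Finset

namespace SimpleGraph

variable {V : Type*} {G : SimpleGraph V}

theorem exists_forall_adj_eq_or_eq_of_injective {β : Type*} {f : V → β} (hf : f.Injective)
    {s : β} (hcover : ∀ u v, G.Adj u v → f u = s ∨ f v = s) (hedge : ∃ a b, G.Adj a b) :
    ∃ c, ∀ u v, G.Adj u v → u = c ∨ v = c := by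
  obtain ⟨a, b, hab⟩ := hedge
  obtain ⟨c, hc⟩ : ∃ c, f c = s := (hcover a b hab).elim (⟨a, ·⟩) (⟨b, ·⟩)
  exact ⟨c, fun u v huv => (hcover u v huv).imp (fun h => hf (h.trans hc.symm))
    (fun h => hf (h.trans hc.symm))⟩

section SumsetLabeling

variable {α : Type*} [AddCommGroup α] [Fintype α] [DecidableEq α] {f : V → Finset α}

theorem label_eq_univ_or_label_eq_univ_of_adj
    (hweak : ∀ u v, G.Adj u v → #(f u) = 1 ∨ #(f v) = 1)
    (hmax : ∀ u v, G.Adj u v → f u + f v = univ) {u v : V} (huv : G.Adj u v) :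
    f u = univ ∨ f v = univ :=
  (hweak u v huv).symm.imp (eq_univ_of_add_eq_univ_of_card_eq_one · (hmax u v huv))
    (eq_univ_of_card_eq_one_of_add_eq_univ · (hmax u v huv))

theorem label_eq_univ_of_one_lt_card (hconn : G.Connected) (hedge : ∃ a b, G.Adj a b)
    (hweak : ∀ u v, G.Adj u v → #(f u) = 1 ∨ #(f v) = 1)
    (hmax : ∀ u v, G.Adj u v → f u + f v = univ) {v : V} (hv : 1 < #(f v)) : f v = univ := by
  obtain ⟨a, b, hab⟩ := hedge
  have : Nontrivial V := hab.nontrivial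
  obtain ⟨u, hvu⟩ := hconn.preconnected.exists_adj_of_nontrivial v
  have hu : #(f u) = 1 := (hweak v u hvu).resolve_left hv.ne'
  exact eq_univ_of_add_eq_univ_of_card_eq_one hu (hmax v u hvu)

end SumsetLabeling

end SimpleGraph

open SimpleGraph

theorem stmt_18_general {V : Type*} (G : SimpleGraph V) (hconn : G.Connected)
    (hedge : ∃ a b, G.Adj a b) (n : ℕ) [NeZero n]
    (f : V → Finset (ZMod n)) (hinj : Function.Injective f)
    (hweak : ∀ u v, G.Adj u v → (f u).card = 1 ∨ (f v).card = 1)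
    (hmax : ∀ u v, G.Adj u v → f u + f v = (Finset.univ : Finset (ZMod n))) :
    (∀ v, 1 < (f v).card → f v = (Finset.univ : Finset (ZMod n))) ∧
    (∃ c : V, ∀ u v, G.Adj u v → u = c ∨ v = c) :=
  ⟨fun _ => label_eq_univ_of_one_lt_card hconn hedge hweak hmax,
    exists_forall_adj_eq_or_eq_of_injective hinj
      (fun _ _ => label_eq_univ_or_label_eq_univ_of_adj hweak hmax) hedge⟩

theorem stmt_18 {V : Type*} (G : SimpleGraph V) (hconn : G.Connected)
    (hedge : ∃ a b, G.Adj a b) (n : ℕ) [NeZero n]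
    (f : V → Finset (ZMod n)) (hinj : Function.Injective f)
    (hne : ∀ v, (f v).Nonempty)
    (hweak : ∀ u v, G.Adj u v → (f u).card = 1 ∨ (f v).card = 1)
    (hmax : ∀ u v, G.Adj u v → f u + f v = (Finset.univ : Finset (ZMod n))) :
    (∀ v, 1 < (f v).card → f v = (Finset.univ : Finset (ZMod n))) ∧
    (∃ c : V, ∀ u v, G.Adj u v → u = c ∨ v = c) :=
  stmt_18_general G hconn hedge n f hinj hweak hmax
end
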